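/- Scaled supremum interpolation bound (key inequality in the proof of Theorem 4.5): Let ρ>0, α∈(0,1/2), and p>1/α. There is a constant C, depending only on ρ, α, p, such that for every L ≥ 1 and every continuously differentiable B:ℝ→ℂ with finite ‖B‖_{L^p_ρ} and ‖B‖_{H¹_ρ}, sup_{|x|≤L}|B(x)| ≤ C · L^{(1/p)(1−2α)(ρ−1) + α(1+ρ)} · ‖B‖_{L^p_ρ}^{1−2α} · ‖B‖_{H¹_ρ}^{2α}. -/

import Mathlib

/-!
On `[-L, L]` the weight satisfies `1 ≤ c · w_ρ` with `c = 2^{ρ/2} L^ρ`. For `|x| ≤ L` and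
`0 < δ ≤ 1` pick an interval `J ⊆ [-L, L]` of length `δ` containing `x`; averaging the fundamental
theorem of calculus over `J` and applying Hölder on `J` gives
`|B x| ≤ δ^{-1/p} X + δ^{1/2} Y` with `X = c^{1/p} ‖B‖_{L^p_ρ}`, `Y = c^{1/2} ‖B‖_{H¹_ρ}`,
and, from the same estimate with `2` in place of `p` and `δ = 1`, `|B x| ≤ 2Y`; this settles the
case `Y ≤ X`. When `0 < X < Y`, taking `δ = (X/Y)^{2αp}` yields `|B x| ≤ 2 X^{1-2α} Y^{2α}`, and
`X = 0` follows by continuity. Since `1/p < α`, the resulting power `ρ((1-2α)/p + α)` of `L` is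
at most the claimed one.
-/

open MeasureTheory Set

/-- The weight `w_ρ(x) = (1+x²)^{-ρ/2}`. -/
noncomputable def wgt (ρ x : ℝ) : ℝ := (1 + x ^ 2) ^ (-(ρ / 2))

/-- Weighted `L^p` norm of a complex-valued function. -/
noncomputable def LpWC (ρ p : ℝ) (u : ℝ → ℂ) : ℝ :=
  (∫ x : ℝ, wgt ρ x * ‖u x‖ ^ p) ^ (1 / p)

/-- Weighted `H¹` norm of a complex-valued function. -/
noncomputable def H1WC (ρ : ℝ) (u : ℝ → ℂ) : ℝ :=
  Real.sqrt ((∫ x : ℝ, wgt ρ x * ‖u x‖ ^ 2) + ∫ x : ℝ, wgt ρ x * ‖deriv u x‖ ^ 2)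

lemma le_two_mul_rpow_mul_rpow_of_pos {M X Y a b θ : ℝ} (ha : 0 < a) (hθ₀ : 0 ≤ θ)
    (hθ₁ : θ ≤ 1) (habθ : a ≤ θ * (a + b)) (hX : 0 < X) (hY : 0 ≤ Y) (hM : M ≤ 2 * Y)
    (h : ∀ δ : ℝ, 0 < δ → δ ≤ 1 → M ≤ δ ^ (-a) * X + δ ^ b * Y) :
    M ≤ 2 * X ^ (1 - θ) * Y ^ θ := by
  rcases le_or_gt Y X with hYX | hXY
  · calc M ≤ 2 * Y := hM
      _ = 2 * (Y ^ (1 - θ) * Y ^ θ) := by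
        rw [← Real.rpow_add' hY (by norm_num), sub_add_cancel, Real.rpow_one]
      _ ≤ 2 * X ^ (1 - θ) * Y ^ θ := by
        rw [← mul_assoc]; gcongr
  have hY₀ : 0 < Y := hX.trans hXY
  set t := X / Y with ht
  have ht₀ : 0 < t := div_pos hX hY₀
  have ht₁ : t ≤ 1 := (div_le_one hY₀).2 hXY.le
  have hXt : X = t * Y := by rw [ht, div_mul_cancel₀ _ hY₀.ne']
  have hrhs : X ^ (1 - θ) * Y ^ θ = t ^ (1 - θ) * Y := by
    rw [ht, Real.div_rpow hX.le hY₀.le, div_mul_eq_mul_div, mul_div_assoc]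
    congr 1
    rw [eq_div_iff (by positivity), ← Real.rpow_add hY₀, add_sub_cancel, Real.rpow_one]
  -- with `δ = t ^ (θ / a)` the first term is exactly `t ^ (1 - θ) * Y`
  have hδ := h (t ^ (θ / a)) (Real.rpow_pos_of_pos ht₀ _)
    (Real.rpow_le_one ht₀.le ht₁ (div_nonneg hθ₀ ha.le))
  have h₁ : (t ^ (θ / a)) ^ (-a) * X = t ^ (1 - θ) * Y := by
    rw [← Real.rpow_mul ht₀.le, show θ / a * -a = -θ by field_simp, hXt, ← mul_assoc,
      ← Real.rpow_add_one ht₀.ne', neg_add_eq_sub]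
  have h₂ : (t ^ (θ / a)) ^ b * Y ≤ t ^ (1 - θ) * Y := by
    rw [← Real.rpow_mul ht₀.le]
    refine mul_le_mul_of_nonneg_right (Real.rpow_le_rpow_of_exponent_ge ht₀ ht₁ ?_) hY
    rw [div_mul_eq_mul_div, le_div_iff₀ ha]
    linarith
  linarith

lemma le_two_mul_rpow_mul_rpow {M X Y a b θ : ℝ} (ha : 0 < a) (hθ₀ : 0 ≤ θ)
    (hθ₁ : θ ≤ 1) (habθ : a ≤ θ * (a + b)) (hX : 0 ≤ X) (hY : 0 ≤ Y) (hM : M ≤ 2 * Y)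
    (h : ∀ δ : ℝ, 0 < δ → δ ≤ 1 → M ≤ δ ^ (-a) * X + δ ^ b * Y) :
    M ≤ 2 * X ^ (1 - θ) * Y ^ θ := by
  have hε : ∀ ε > 0, M ≤ 2 * (X + ε) ^ (1 - θ) * Y ^ θ := fun ε hε ↦
    le_two_mul_rpow_mul_rpow_of_pos ha hθ₀ hθ₁ habθ (by positivity) hY hM fun δ hδ hδ₁ ↦
      (h δ hδ hδ₁).trans (by gcongr; linarith)
  have hcont : Continuous fun ε : ℝ ↦ 2 * (X + ε) ^ (1 - θ) * Y ^ θ := by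
    have := Real.continuous_rpow_const (sub_nonneg.2 hθ₁)
    fun_prop
  have hlim := (hcont.tendsto 0).mono_left (nhdsWithin_le_nhds (s := Ioi 0))
  rw [add_zero] at hlim
  exact ge_of_tendsto hlim (eventually_nhdsWithin_of_forall hε)

lemma integral_le_measureReal_univ_rpow_mul {Ω : Type*} [MeasurableSpace Ω] {μ : Measure Ω}
    [IsFiniteMeasure μ] {f : Ω → ℝ} {r : ℝ} (hr : 1 < r) (hf₀ : 0 ≤ᵐ[μ] f)
    (hf : MemLp f (ENNReal.ofReal r) μ) :
    ∫ x, f x ∂μ ≤ μ.real univ ^ (1 - 1 / r) * (∫ x, f x ^ r ∂μ) ^ (1 / r) := by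
  have hrq := Real.HolderConjugate.conjExponent hr
  have h := integral_mul_le_Lp_mul_Lq_of_nonneg hrq hf₀ (ae_of_all _ fun _ ↦ zero_le_one) hf
    (memLp_const 1)
  simp only [mul_one, Real.one_rpow, integral_const, smul_eq_mul] at h
  rwa [one_div r.conjExponent, ← hrq.one_sub_inv, ← one_div, mul_comm] at h

lemma setIntegral_Icc_le_rpow_mul {f : ℝ → ℝ} (hf : Continuous f) (hf₀ : ∀ x, 0 ≤ f x)
    {a b r : ℝ} (hab : a ≤ b) (hr : 1 < r) :
    ∫ x in Icc a b, f x ≤ (b - a) ^ (1 - 1 / r) * (∫ x in Icc a b, f x ^ r) ^ (1 / r) := by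
  obtain ⟨C, hC⟩ := (isCompact_Icc (a := a) (b := b)).exists_bound_of_continuousOn
    hf.continuousOn
  have hfLp : MemLp f (ENNReal.ofReal r) (volume.restrict (Icc a b)) :=
    (memLp_top_of_bound hf.aestronglyMeasurable C
      ((ae_restrict_iff' measurableSet_Icc).2 (ae_of_all _ hC))).mono_exponent le_top
  have := integral_le_measureReal_univ_rpow_mul hr (ae_of_all _ hf₀) hfLp
  rwa [measureReal_restrict_apply_univ, Real.volume_real_Icc_of_le hab] at this

lemma norm_sub_le_setIntegral_norm_deriv {E : Type*} [NormedAddCommGroup E] [NormedSpace ℝ E]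
    [CompleteSpace E] {f : ℝ → E} (hf : ContDiff ℝ 1 f) {a b x y : ℝ}
    (hx : x ∈ Icc a b) (hy : y ∈ Icc a b) :
    ‖f x - f y‖ ≤ ∫ t in Icc a b, ‖deriv f t‖ := by
  have hf' : Continuous (deriv f) := hf.continuous_deriv le_rfl
  rw [← intervalIntegral.integral_deriv_eq_sub
    (fun t _ ↦ (hf.differentiable one_ne_zero).differentiableAt) (hf'.intervalIntegrable _ _)]
  calc ‖∫ t in y..x, deriv f t‖ ≤ ∫ t in uIoc y x, ‖deriv f t‖ :=
        intervalIntegral.norm_integral_le_integral_norm_uIoc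
    _ ≤ ∫ t in Icc a b, ‖deriv f t‖ :=
        setIntegral_mono_set hf'.norm.integrableOn_Icc (ae_of_all _ fun _ ↦ norm_nonneg _)
          (uIoc_subset_uIcc.trans (uIcc_subset_Icc hy hx)).eventuallyLE

lemma norm_le_inv_mul_setIntegral_norm_add {E : Type*} [NormedAddCommGroup E] [NormedSpace ℝ E]
    [CompleteSpace E] {f : ℝ → E} (hf : ContDiff ℝ 1 f) {a b x : ℝ}
    (hab : a < b) (hx : x ∈ Icc a b) :
    ‖f x‖ ≤ (b - a)⁻¹ * (∫ t in Icc a b, ‖f t‖) + ∫ t in Icc a b, ‖deriv f t‖ := by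
  obtain ⟨y, hy, hfy⟩ := exists_le_setAverage (μ := volume) (s := Icc a b) (f := fun t ↦ ‖f t‖)
    (by simp [hab]) (by simp) hf.continuous.norm.integrableOn_Icc
  rw [setAverage_eq, Real.volume_real_Icc_of_le hab.le, smul_eq_mul] at hfy
  calc ‖f x‖ ≤ ‖f y‖ + ‖f x - f y‖ := norm_le_norm_add_norm_sub' _ _
    _ ≤ _ := add_le_add hfy (norm_sub_le_setIntegral_norm_deriv hf hx hy)

lemma wgt_pos (ρ x : ℝ) : 0 < wgt ρ x := Real.rpow_pos_of_pos (by positivity) _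

lemma one_le_mul_wgt {ρ L x : ℝ} (hρ : 0 ≤ ρ) (hL : 1 ≤ L) (hx : |x| ≤ L) :
    1 ≤ 2 ^ (ρ / 2) * L ^ ρ * wgt ρ x := by
  have hx2 : 1 + x ^ 2 ≤ 2 * L ^ 2 := by nlinarith [sq_abs x, abs_nonneg x]
  have hc : (2 : ℝ) ^ (ρ / 2) * L ^ ρ = (2 * L ^ 2) ^ (ρ / 2) := by
    rw [Real.mul_rpow (by norm_num) (by positivity), ← Real.rpow_natCast,
      ← Real.rpow_mul (by linarith)]
    ring_nf
  rw [hc, wgt, Real.rpow_neg (by positivity), ← div_eq_mul_inv, one_le_div (by positivity)]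
  exact Real.rpow_le_rpow (by positivity) hx2 (by positivity)

lemma setIntegral_le_mul_integral_wgt {ρ L a b : ℝ} {f : ℝ → ℝ} (hρ : 0 ≤ ρ) (hL : 1 ≤ L)
    (hf₀ : ∀ x, 0 ≤ f x) (hf : Integrable fun x ↦ wgt ρ x * f x)
    (hsub : Icc a b ⊆ Icc (-L) L) :
    ∫ x in Icc a b, f x ≤ 2 ^ (ρ / 2) * L ^ ρ * ∫ x, wgt ρ x * f x := by
  have hle : ∀ x ∈ Icc a b, f x ≤ 2 ^ (ρ / 2) * L ^ ρ * (wgt ρ x * f x) := fun x hx ↦ by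
    rw [← mul_assoc]
    exact le_mul_of_one_le_left (hf₀ x) (one_le_mul_wgt hρ hL (abs_le.2 (hsub hx)))
  calc ∫ x in Icc a b, f x ≤ ∫ x in Icc a b, 2 ^ (ρ / 2) * L ^ ρ * (wgt ρ x * f x) :=
        integral_mono_of_nonneg (ae_of_all _ hf₀) (hf.integrableOn.const_mul _)
          ((ae_restrict_iff' measurableSet_Icc).2 (ae_of_all _ hle))
    _ = 2 ^ (ρ / 2) * L ^ ρ * ∫ x in Icc a b, wgt ρ x * f x := integral_const_mul _ _
    _ ≤ 2 ^ (ρ / 2) * L ^ ρ * ∫ x, wgt ρ x * f x := by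
        refine mul_le_mul_of_nonneg_left ?_ (by positivity)
        exact setIntegral_le_integral hf
          (ae_of_all _ fun x ↦ mul_nonneg (wgt_pos ρ x).le (hf₀ x))

lemma exists_Icc_mem_subset {L x δ : ℝ} (hx : |x| ≤ L) (hδ₀ : 0 ≤ δ) (hδ : δ ≤ 2 * L) :
    ∃ a, x ∈ Icc a (a + δ) ∧ Icc a (a + δ) ⊆ Icc (-L) L := by
  obtain ⟨hLx, hxL⟩ := abs_le.1 hx
  refine ⟨min x (L - δ), ⟨min_le_left _ _, ?_⟩, Icc_subset_Icc (le_min hLx (by linarith)) ?_⟩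
  · rw [← min_add_add_right, sub_add_cancel]
    exact le_min (by linarith) hxL
  · linarith [min_le_right x (L - δ)]

lemma setIntegral_norm_le_rpow_mul_integral_wgt {E : Type*} [NormedAddCommGroup E] {g : ℝ → E}
    (hg : Continuous g) {ρ L a b r : ℝ} (hρ : 0 ≤ ρ) (hL : 1 ≤ L) (hr : 1 < r)
    (hg_int : Integrable fun x ↦ wgt ρ x * ‖g x‖ ^ r) (hab : a ≤ b)
    (hsub : Icc a b ⊆ Icc (-L) L) :
    ∫ x in Icc a b, ‖g x‖ ≤
      (b - a) ^ (1 - 1 / r) * (2 ^ (ρ / 2) * L ^ ρ * ∫ x, wgt ρ x * ‖g x‖ ^ r) ^ (1 / r) := by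
  refine (setIntegral_Icc_le_rpow_mul hg.norm (fun _ ↦ norm_nonneg _) hab hr).trans ?_
  gcongr
  exact setIntegral_le_mul_integral_wgt hρ hL (fun _ ↦ by positivity) hg_int hsub

lemma norm_le_rpow_neg_mul_add_rpow_mul {E : Type*} [NormedAddCommGroup E] [NormedSpace ℝ E]
    [CompleteSpace E] {B : ℝ → E} (hB : ContDiff ℝ 1 B)
    {ρ L r s x δ : ℝ} (hρ : 0 ≤ ρ) (hL : 1 ≤ L) (hr : 1 < r) (hs : 1 < s)
    (hB_int : Integrable fun x ↦ wgt ρ x * ‖B x‖ ^ r)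
    (hB'_int : Integrable fun x ↦ wgt ρ x * ‖deriv B x‖ ^ s)
    (hx : |x| ≤ L) (hδ : 0 < δ) (hδL : δ ≤ 2 * L) :
    ‖B x‖ ≤ δ ^ (-(1 / r)) * (2 ^ (ρ / 2) * L ^ ρ * ∫ x, wgt ρ x * ‖B x‖ ^ r) ^ (1 / r) +
      δ ^ (1 - 1 / s) * (2 ^ (ρ / 2) * L ^ ρ * ∫ x, wgt ρ x * ‖deriv B x‖ ^ s) ^ (1 / s) := by
  obtain ⟨a, hxa, hsub⟩ := exists_Icc_mem_subset hx hδ.le hδL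
  have hab : a ≤ a + δ := by linarith
  have hB₁ := setIntegral_norm_le_rpow_mul_integral_wgt hB.continuous hρ hL hr hB_int hab hsub
  have hB₂ := setIntegral_norm_le_rpow_mul_integral_wgt (hB.continuous_deriv le_rfl) hρ hL hs
    hB'_int hab hsub
  have hB₀ := norm_le_inv_mul_setIntegral_norm_add hB (by linarith) hxa
  rw [add_sub_cancel_left] at hB₀ hB₁ hB₂
  have hδr : δ ^ (-(1 / r)) = δ⁻¹ * δ ^ (1 - 1 / r) := by
    rw [← Real.rpow_neg_one, ← Real.rpow_add hδ]
    ring_nf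
  rw [hδr, mul_assoc]
  exact hB₀.trans (by gcongr)

lemma integral_wgt_mul_rpow_nonneg (ρ r : ℝ) (u : ℝ → ℂ) :
    0 ≤ ∫ x, wgt ρ x * ‖u x‖ ^ r :=
  integral_nonneg fun x ↦ mul_nonneg (wgt_pos ρ x).le (by positivity)

lemma LpWC_nonneg (ρ p : ℝ) (u : ℝ → ℂ) : 0 ≤ LpWC ρ p u :=
  Real.rpow_nonneg (integral_wgt_mul_rpow_nonneg ρ p u) _

lemma H1WC_nonneg (ρ : ℝ) (u : ℝ → ℂ) : 0 ≤ H1WC ρ u := Real.sqrt_nonneg _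

lemma rpow_half_mul_le_mul_H1WC {ρ c I : ℝ} {B : ℝ → ℂ} (hc : 0 ≤ c) (hI : 0 ≤ I)
    (hle : I ≤ (∫ x, wgt ρ x * ‖B x‖ ^ 2) + ∫ x, wgt ρ x * ‖deriv B x‖ ^ 2) :
    (c * I) ^ (1 / 2 : ℝ) ≤ c ^ (1 / 2 : ℝ) * H1WC ρ B := by
  rw [Real.mul_rpow hc hI, H1WC, Real.sqrt_eq_rpow]
  gcongr

lemma norm_le_two_mul_rpow_half_mul_H1WC {ρ L x : ℝ} {B : ℝ → ℂ} (hρ : 0 ≤ ρ) (hL : 1 ≤ L)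
    (hB : ContDiff ℝ 1 B) (hB2 : Integrable fun x ↦ wgt ρ x * ‖B x‖ ^ 2)
    (hB'2 : Integrable fun x ↦ wgt ρ x * ‖deriv B x‖ ^ 2) (hx : |x| ≤ L) :
    ‖B x‖ ≤ 2 * ((2 ^ (ρ / 2) * L ^ ρ) ^ (1 / 2 : ℝ) * H1WC ρ B) := by
  simp only [← Real.rpow_two] at hB2 hB'2
  have h := norm_le_rpow_neg_mul_add_rpow_mul hB hρ hL one_lt_two one_lt_two hB2 hB'2 hx
    one_pos (by linarith)
  have hI := integral_wgt_mul_rpow_nonneg ρ 2 B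
  have hI' := integral_wgt_mul_rpow_nonneg ρ 2 (deriv B)
  simp only [Real.one_rpow, one_mul, Real.rpow_two] at h hI hI'
  have hc : (0 : ℝ) ≤ 2 ^ (ρ / 2) * L ^ ρ := by positivity
  linarith [rpow_half_mul_le_mul_H1WC hc hI (le_add_of_nonneg_right hI'),
    rpow_half_mul_le_mul_H1WC hc hI' (le_add_of_nonneg_left hI)]

lemma norm_le_rpow_neg_mul_LpWC_add_rpow_half_mul_H1WC {ρ p L x δ : ℝ} {B : ℝ → ℂ}
    (hρ : 0 ≤ ρ) (hp : 1 < p) (hL : 1 ≤ L) (hB : ContDiff ℝ 1 B)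
    (hBp : Integrable fun x ↦ wgt ρ x * ‖B x‖ ^ p)
    (hB'2 : Integrable fun x ↦ wgt ρ x * ‖deriv B x‖ ^ 2) (hx : |x| ≤ L) (hδ : 0 < δ)
    (hδ₁ : δ ≤ 1) :
    ‖B x‖ ≤ δ ^ (-(1 / p)) * ((2 ^ (ρ / 2) * L ^ ρ) ^ (1 / p) * LpWC ρ p B) +
      δ ^ (1 / 2 : ℝ) * ((2 ^ (ρ / 2) * L ^ ρ) ^ (1 / 2 : ℝ) * H1WC ρ B) := by
  simp only [← Real.rpow_two] at hB'2
  have h := norm_le_rpow_neg_mul_add_rpow_mul hB hρ hL hp one_lt_two hBp hB'2 hx hδ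
    (by linarith)
  have hc : (0 : ℝ) ≤ 2 ^ (ρ / 2) * L ^ ρ := by positivity
  have hLp : (2 ^ (ρ / 2) * L ^ ρ * ∫ x, wgt ρ x * ‖B x‖ ^ p) ^ (1 / p) =
      (2 ^ (ρ / 2) * L ^ ρ) ^ (1 / p) * LpWC ρ p B :=
    Real.mul_rpow hc (integral_wgt_mul_rpow_nonneg ρ p B)
  have hI := integral_wgt_mul_rpow_nonneg ρ 2 B
  have hI' := integral_wgt_mul_rpow_nonneg ρ 2 (deriv B)
  simp only [hLp, Real.rpow_two, show (1 : ℝ) - 1 / 2 = 1 / 2 by norm_num] at h hI hI'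
  refine h.trans ?_
  gcongr
  exact rpow_half_mul_le_mul_H1WC hc hI' (le_add_of_nonneg_left hI)

lemma norm_le_two_mul_rpow_mul_LpWC_mul_H1WC {ρ α p L x : ℝ} {B : ℝ → ℂ} (hρ : 0 ≤ ρ)
    (hα₀ : 0 ≤ α) (hα₁ : α ≤ 1 / 2) (hp : 1 < p) (hαp : 1 / p * (1 - 2 * α) ≤ α)
    (hL : 1 ≤ L) (hB : ContDiff ℝ 1 B) (hBp : Integrable fun x ↦ wgt ρ x * ‖B x‖ ^ p)
    (hB2 : Integrable fun x ↦ wgt ρ x * ‖B x‖ ^ 2)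
    (hB'2 : Integrable fun x ↦ wgt ρ x * ‖deriv B x‖ ^ 2) (hx : |x| ≤ L) :
    ‖B x‖ ≤ 2 * (2 ^ (ρ / 2) * L ^ ρ) ^ (1 / p * (1 - 2 * α) + α) *
      LpWC ρ p B ^ (1 - 2 * α) * H1WC ρ B ^ (2 * α) := by
  have hc : 0 < (2 : ℝ) ^ (ρ / 2) * L ^ ρ := by positivity
  have h := le_two_mul_rpow_mul_rpow (a := 1 / p) (b := 1 / 2) (θ := 2 * α) (by positivity)
    (by linarith) (by linarith) (by linarith) (mul_nonneg (by positivity) (LpWC_nonneg ρ p B))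
    (mul_nonneg (by positivity) (H1WC_nonneg ρ B))
    (norm_le_two_mul_rpow_half_mul_H1WC hρ hL hB hB2 hB'2 hx)
    fun _ hδ hδ₁ ↦
      norm_le_rpow_neg_mul_LpWC_add_rpow_half_mul_H1WC hρ hp hL hB hBp hB'2 hx hδ hδ₁
  rw [Real.mul_rpow (by positivity) (LpWC_nonneg ρ p B), Real.mul_rpow (by positivity)
    (H1WC_nonneg ρ B), ← Real.rpow_mul hc.le, ← Real.rpow_mul hc.le] at h
  convert h using 1
  rw [Real.rpow_add hc, show 1 / 2 * (2 * α) = α by ring]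
  ring

/-- Scaled supremum interpolation bound (key inequality in the proof of
Theorem 4.5): for `ρ>0`, `α∈(0,1/2)`, `p>1/α` there is `C` such that for every
`L ≥ 1` and every `C¹` function `B` with finite weighted norms,
`sup_{|x|≤L}|B(x)| ≤ C L^{(1/p)(1-2α)(ρ-1)+α(1+ρ)} ‖B‖_{L^p_ρ}^{1-2α} ‖B‖_{H¹_ρ}^{2α}`. -/
theorem scaled_sup_interpolation
    (ρ α p : ℝ) (hρ : 0 < ρ) (hα : α ∈ Ioo (0 : ℝ) (1 / 2)) (hp : 1 / α < p) :
    ∃ C > (0 : ℝ), ∀ L : ℝ, 1 ≤ L → ∀ B : ℝ → ℂ,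
      ContDiff ℝ 1 B →
      MeasureTheory.Integrable (fun x => wgt ρ x * ‖B x‖ ^ p) →
      MeasureTheory.Integrable (fun x => wgt ρ x * ‖B x‖ ^ 2) →
      MeasureTheory.Integrable (fun x => wgt ρ x * ‖deriv B x‖ ^ 2) →
      ∀ x : ℝ, |x| ≤ L →
        ‖B x‖ ≤ C * L ^ ((1 / p) * (1 - 2 * α) * (ρ - 1) + α * (1 + ρ)) *
          LpWC ρ p B ^ (1 - 2 * α) * H1WC ρ B ^ (2 * α) := by
  obtain ⟨hα₀, hα₁⟩ := hα
  have hp₁ : 1 < p := (one_lt_one_div hα₀ (by linarith)).trans hp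
  have hαp : 1 / p < α := (one_div_lt hα₀ (by linarith)).1 hp
  have hαp' : 1 / p * (1 - 2 * α) ≤ α := by nlinarith [one_div_pos.2 (by linarith : 0 < p)]
  set e := 1 / p * (1 - 2 * α) + α
  refine ⟨2 * (2 ^ (ρ / 2)) ^ e, by positivity, fun L hL B hB hBp hB2 hB'2 x hx ↦ ?_⟩
  have hLe : L ^ (ρ * e) ≤ L ^ ((1 / p) * (1 - 2 * α) * (ρ - 1) + α * (1 + ρ)) :=
    Real.rpow_le_rpow_of_exponent_le hL (by linarith)
  calc ‖B x‖ ≤ 2 * (2 ^ (ρ / 2) * L ^ ρ) ^ e * LpWC ρ p B ^ (1 - 2 * α) *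
        H1WC ρ B ^ (2 * α) :=
        norm_le_two_mul_rpow_mul_LpWC_mul_H1WC hρ.le hα₀.le hα₁.le hp₁ hαp' hL hB hBp hB2 hB'2 hx
    _ = 2 * (2 ^ (ρ / 2)) ^ e * L ^ (ρ * e) * LpWC ρ p B ^ (1 - 2 * α) *
        H1WC ρ B ^ (2 * α) := by
        rw [Real.mul_rpow (by positivity) (by positivity),
          ← Real.rpow_mul (x := L) (by linarith)]
        ring
    _ ≤ _ := by
        have := LpWC_nonneg ρ p B
        have := H1WC_nonneg ρ B
        gcongr
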